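/- The logic PF^ω is a conservative extension of S: for any formula A of the unimodal language L_p (containing only the modal operator □p), A is a theorem of PF^ω if and only if A is a theorem of S. -/
import Mathlib


namespace PFPaper

/-- Formulas of the bimodal language `L_pf`, with propositional variables indexed by `ℕ`,
connectives `¬, ∧, ∨, →` and two modal operators `□p` (`boxp`) and `□f` (`boxf`). -/
inductive Formula : Type
  | var : ℕ → Formula
  | neg : Formula → Formula
  | and : Formula → Formula → Formula
  | or : Formula → Formula → Formula
  | imp : Formula → Formula → Formula
  | boxp : Formula → Formula
  | boxf : Formula → Formula
  deriving DecidableEq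

/-- `◇p A := ¬□p¬A`. -/
def diap (A : Formula) : Formula := .neg (.boxp (.neg A))

/-- `◇f A := ¬□f¬A`. -/
def diaf (A : Formula) : Formula := .neg (.boxf (.neg A))

/-- `A ↔ B` as an abbreviation: `(A → B) ∧ (B → A)`. -/
def iffF (A B : Formula) : Formula := .and (.imp A B) (.imp B A)

/-- `A` is a propositional tautology of `L_pf`: every Boolean assignment that treats
variables and boxed formulas as atoms and respects the connectives makes `A` true. -/
def Taut (A : Formula) : Prop :=
  ∀ f : Formula → Bool,
    (∀ B, f (.neg B) = !(f B)) →
    (∀ B C, f (.and B C) = (f B && f C)) →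
    (∀ B C, f (.or B C) = (f B || f C)) →
    (∀ B C, f (.imp B C) = (!(f B) || f C)) →
    f A = true

/-- The bimodal logic `PF`. -/
inductive PF : Formula → Prop
  | taut {A} : Taut A → PF A
  | kp (A B) : PF (.imp (.boxp (.imp A B)) (.imp (.boxp A) (.boxp B)))
  | lob (A) : PF (.imp (.boxp (.imp (.boxp A) A)) (.boxp A))
  | kf (A B) : PF (.imp (.boxf (.imp A B)) (.imp (.boxf A) (.boxf B)))
  | tf (A) : PF (.imp (.boxf A) A)
  | fourf (A) : PF (.imp (.boxf A) (.boxf (.boxf A)))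
  | dot2f (A) : PF (.imp (diaf (.boxf A)) (.boxf (diaf A)))
  | pf1 (A) : PF (.imp (.boxp A) (.boxf (.boxp A)))
  | pf2 (A) : PF (.imp (diap A) (.boxf (diap A)))
  | pf3 (A) : PF (.imp (.boxp A) (.boxp (.boxf A)))
  | mp {A B} : PF (.imp A B) → PF A → PF B
  | necp {A} : PF A → PF (.boxp A)
  | necf {A} : PF A → PF (.boxf A)

/-- The logic `PF^ω`: axioms are all theorems of `PF` together with all formulas
`□p A → □f A`; the sole rule is modus ponens. -/
inductive PFomega : Formula → Prop
  | ofPF {A} : PF A → PFomega A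
  | reflAx (A) : PFomega (.imp (.boxp A) (.boxf A))
  | mp {A B} : PFomega (.imp A B) → PFomega A → PFomega B

section Semantics

variable {W : Type}

/-- Kripke satisfaction on a frame `(W, R, S)` (`R` = `⊏` interprets `□p`,
`S` = `≼` interprets `□f`) with valuation `V`. -/
def Sat (R S : W → W → Prop) (V : W → ℕ → Prop) : W → Formula → Prop
  | w, .var n => V w n
  | w, .neg A => ¬ Sat R S V w A
  | w, .and A B => Sat R S V w A ∧ Sat R S V w B
  | w, .or A B => Sat R S V w A ∨ Sat R S V w B
  | w, .imp A B => Sat R S V w A → Sat R S V w B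
  | w, .boxp A => ∀ v, R w v → Sat R S V v A
  | w, .boxf A => ∀ v, S w v → Sat R S V v A

/-- `A` is valid on the frame `(W, R, S)`. -/
def ValidOn (R S : W → W → Prop) (A : Formula) : Prop :=
  ∀ (V : W → ℕ → Prop) (w : W), Sat R S V w A

/-- `(W, R, S)` is a `PF`-frame: all theorems of `PF` are valid on it. -/
def IsPFFrame (R S : W → W → Prop) : Prop :=
  ∀ A : Formula, PF A → ValidOn R S A

/-- The symmetric closure `∼` of `≼`. -/
def SymCl (S : W → W → Prop) (x y : W) : Prop := S x y ∨ S y x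

/-- `∼⁺`: the transitive closure of the symmetric closure of `≼`. -/
def EqCl (S : W → W → Prop) : W → W → Prop := Relation.TransGen (SymCl S)

/-- The cluster of `x`: its `∼⁺`-equivalence class. -/
def cluster (S : W → W → Prop) (x : W) : Set W := {y | EqCl S x y}

/-- A frame is nice iff `x ⊏ z` and `y ≼ z` imply `x ⊏ y`. -/
def Nice (R S : W → W → Prop) : Prop := ∀ x y z : W, R x z → S y z → R x y

/-- A nice `PF`-frame is rooted iff there is a `⊏`-root cluster and every cluster
has a `≼`-root element. -/
def Rooted (R S : W → W → Prop) : Prop :=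
  (∃ r : W, ∀ x : W, cluster S r = cluster S x ∨ R r x) ∧
  (∀ x : W, ∃ y ∈ cluster S x, ∀ z ∈ cluster S x, S y z)

/-- The cluster of `x`, preordered by `≼`, is a pre-Boolean algebra: its quotient by
`x ≈ y ↔ (x ≼ y ∧ y ≼ x)` forms a Boolean algebra, i.e. there is a Boolean algebra `B`
and a surjection `f` from the cluster onto `B` with `a ≼ b ↔ f a ≤ f b`. -/
def ClusterPBA (S : W → W → Prop) (x : W) : Prop :=
  ∃ (B : Type) (inst : BooleanAlgebra B) (f : cluster S x → B),
    Function.Surjective f ∧ ∀ a b : cluster S x, S a.1 b.1 ↔ inst.le (f a) (f b)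

end Semantics

/-- The list of subformulas of a formula. -/
def subf : Formula → List Formula
  | .var n => [.var n]
  | .neg A => .neg A :: subf A
  | .and A B => .and A B :: (subf A ++ subf B)
  | .or A B => .or A B :: (subf A ++ subf B)
  | .imp A B => .imp A B :: (subf A ++ subf B)
  | .boxp A => .boxp A :: subf A
  | .boxf A => .boxf A :: subf A

/-- `Φ(A) = { □p B → □f B : □p B ∈ Sub(A) }`. -/
def Phi (A : Formula) : List Formula :=
  (subf A).filterMap fun B =>
    match B with
    | .boxp C => some (.imp (.boxp C) (.boxf C))
    | _ => none

/-- Conjunction of a finite list of formulas (a fixed tautology if the list is empty). -/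
def conjList : List Formula → Formula
  | [] => .imp (.var 0) (.var 0)
  | [B] => B
  | B :: C :: t => .and B (conjList (C :: t))

/-- An injective, effective coding of formulas by natural numbers. -/
def encodeF : Formula → ℕ
  | .var n => Nat.pair 0 n
  | .neg A => Nat.pair 1 (encodeF A)
  | .and A B => Nat.pair 2 (Nat.pair (encodeF A) (encodeF B))
  | .or A B => Nat.pair 3 (Nat.pair (encodeF A) (encodeF B))
  | .imp A B => Nat.pair 4 (Nat.pair (encodeF A) (encodeF B))
  | .boxp A => Nat.pair 5 (encodeF A)
  | .boxf A => Nat.pair 6 (encodeF A)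

/-- Formulas of the unimodal language `L_p` (only `□p`, written `box`). -/
inductive LpForm : Type
  | var : ℕ → LpForm
  | neg : LpForm → LpForm
  | and : LpForm → LpForm → LpForm
  | or : LpForm → LpForm → LpForm
  | imp : LpForm → LpForm → LpForm
  | box : LpForm → LpForm
  deriving DecidableEq

/-- Propositional tautologies of `L_p`. -/
def TautLp (A : LpForm) : Prop :=
  ∀ f : LpForm → Bool,
    (∀ B, f (.neg B) = !(f B)) →
    (∀ B C, f (.and B C) = (f B && f C)) →
    (∀ B C, f (.or B C) = (f B || f C)) →
    (∀ B C, f (.imp B C) = (!(f B) || f C)) →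
    f A = true

/-- The provability logic `GL` in the language `L_p`. -/
inductive GLLogic : LpForm → Prop
  | taut {A} : TautLp A → GLLogic A
  | k (A B) : GLLogic (.imp (.box (.imp A B)) (.imp (.box A) (.box B)))
  | lob (A) : GLLogic (.imp (.box (.imp (.box A) A)) (.box A))
  | mp {A B} : GLLogic (.imp A B) → GLLogic A → GLLogic B
  | nec {A} : GLLogic A → GLLogic (.box A)

/-- Solovay's logic `S`: axioms are all theorems of `GL` and all `□p A → A`;
the sole rule is modus ponens. -/
inductive SLogic : LpForm → Prop
  | ofGL {A} : GLLogic A → SLogic A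
  | reflAx (A) : SLogic (.imp (.box A) A)
  | mp {A B} : SLogic (.imp A B) → SLogic A → SLogic B

/-- Embedding of `L_p` into `L_pf` (`box ↦ □p`). -/
def LpForm.toFormula : LpForm → Formula
  | .var n => .var n
  | .neg A => .neg A.toFormula
  | .and A B => .and A.toFormula B.toFormula
  | .or A B => .or A.toFormula B.toFormula
  | .imp A B => .imp A.toFormula B.toFormula
  | .box A => .boxp A.toFormula

/-- The fusion `GL⊗Triv` in the language `L_pf`: the `GL`-axioms for `□p`,
the axiom `A ↔ □f A`, with modus ponens and necessitation for `□p`. -/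
inductive GLTriv : Formula → Prop
  | taut {A} : Taut A → GLTriv A
  | kp (A B) : GLTriv (.imp (.boxp (.imp A B)) (.imp (.boxp A) (.boxp B)))
  | lob (A) : GLTriv (.imp (.boxp (.imp (.boxp A) A)) (.boxp A))
  | triv (A) : GLTriv (iffF A (.boxf A))
  | mp {A B} : GLTriv (.imp A B) → GLTriv A → GLTriv B
  | necp {A} : GLTriv A → GLTriv (.boxp A)

/-- Formulas of the unimodal language `L_f` (only `□f`, written `box`). -/
inductive LfForm : Type
  | var : ℕ → LfForm
  | neg : LfForm → LfForm
  | and : LfForm → LfForm → LfForm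
  | or : LfForm → LfForm → LfForm
  | imp : LfForm → LfForm → LfForm
  | box : LfForm → LfForm
  deriving DecidableEq

/-- `◇f A := ¬□f¬A` in `L_f`. -/
def LfForm.dia (A : LfForm) : LfForm := .neg (.box (.neg A))

/-- Propositional tautologies of `L_f`. -/
def TautLf (A : LfForm) : Prop :=
  ∀ f : LfForm → Bool,
    (∀ B, f (.neg B) = !(f B)) →
    (∀ B C, f (.and B C) = (f B && f C)) →
    (∀ B C, f (.or B C) = (f B || f C)) →
    (∀ B C, f (.imp B C) = (!(f B) || f C)) →
    f A = true

/-- The modal logic `S4.2` in the language `L_f`. -/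
inductive S42 : LfForm → Prop
  | taut {A} : TautLf A → S42 A
  | k (A B) : S42 (.imp (.box (.imp A B)) (.imp (.box A) (.box B)))
  | t (A) : S42 (.imp (.box A) A)
  | four (A) : S42 (.imp (.box A) (.box (.box A)))
  | dot2 (A) : S42 (.imp (LfForm.dia (.box A)) (.box (LfForm.dia A)))
  | mp {A B} : S42 (.imp A B) → S42 A → S42 B
  | nec {A} : S42 A → S42 (.box A)

/-- Embedding of `L_f` into `L_pf` (`box ↦ □f`). -/
def LfForm.toFormula : LfForm → Formula
  | .var n => .var n
  | .neg A => .neg A.toFormula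
  | .and A B => .and A.toFormula B.toFormula
  | .or A B => .or A.toFormula B.toFormula
  | .imp A B => .imp A.toFormula B.toFormula
  | .box A => .boxf A.toFormula

/-- `L_pf`-formulas with no occurrence of `□p`, i.e. `L_f`-formulas. -/
inductive NoBoxp : Formula → Prop
  | var (n) : NoBoxp (.var n)
  | neg {A} : NoBoxp A → NoBoxp (.neg A)
  | and {A B} : NoBoxp A → NoBoxp B → NoBoxp (.and A B)
  | or {A B} : NoBoxp A → NoBoxp B → NoBoxp (.or A B)
  | imp {A B} : NoBoxp A → NoBoxp B → NoBoxp (.imp A B)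
  | boxf {A} : NoBoxp A → NoBoxp (.boxf A)

/-- Clauses of `□p`-CNF: disjunctions `□p D_0 ∨ ⋯ ∨ □p D_{k-1} ∨ ◇p E ∨ F`
with `F` an `L_f`-formula (each of the three parts may be absent). -/
inductive IsClause : Formula → Prop
  | lf {F} : NoBoxp F → IsClause F
  | dia (E : Formula) : IsClause (diap E)
  | diaOr (E : Formula) {F} : NoBoxp F → IsClause (.or (diap E) F)
  | boxAlone (D : Formula) : IsClause (.boxp D)
  | boxOr (D : Formula) {C} : IsClause C → IsClause (.or (.boxp D) C)

/-- A formula in `□p`-conjunctive normal form: a conjunction of clauses. -/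
inductive IsCNF : Formula → Prop
  | clause {C} : IsClause C → IsCNF C
  | and {A B} : IsCNF A → IsCNF B → IsCNF (.and A B)

/-- The `□p`-modal degree of a formula. -/
def deg : Formula → ℕ
  | .var _ => 0
  | .neg A => deg A
  | .and A B => max (deg A) (deg B)
  | .or A B => max (deg A) (deg B)
  | .imp A B => max (deg A) (deg B)
  | .boxf A => deg A
  | .boxp A => deg A + 1

/-- Erase `□f` and read `□p` as `box`. -/
def erase : Formula → LpForm
  | .var n => .var n
  | .neg A => .neg (erase A)
  | .and A B => .and (erase A) (erase B)
  | .or A B => .or (erase A) (erase B)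
  | .imp A B => .imp (erase A) (erase B)
  | .boxp A => .box (erase A)
  | .boxf A => erase A

lemma erase_toFormula (A : LpForm) : erase A.toFormula = A := by
  induction A <;> simp_all [LpForm.toFormula, erase]

lemma taut_erase {A : Formula} (h : Taut A) : TautLp (erase A) := by
  intro f hn ha ho hi
  have := h (fun X => f (erase X)) (fun B => hn (erase B))
    (fun B C => ha (erase B) (erase C)) (fun B C => ho (erase B) (erase C))
    (fun B C => hi (erase B) (erase C))
  exact this

lemma taut_lift {A : LpForm} (h : TautLp A) : Taut A.toFormula := by
  intro f hn ha ho hi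
  have := h (fun X => f X.toFormula) (fun B => hn B.toFormula)
    (fun B C => ha B.toFormula C.toFormula) (fun B C => ho B.toFormula C.toFormula)
    (fun B C => hi B.toFormula C.toFormula)
  exact this

lemma tautLp_imp_self (X : LpForm) : TautLp (.imp X X) := by
  intro f hn ha ho hi
  rw [hi]; cases f X <;> simp

lemma PF_erase {A : Formula} (h : PF A) : GLLogic (erase A) := by
  induction h with
  | taut h => exact GLLogic.taut (taut_erase h)
  | kp A B => exact GLLogic.k (erase A) (erase B)
  | lob A => exact GLLogic.lob (erase A)
  | kf A B => exact GLLogic.taut (tautLp_imp_self _)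
  | tf A => exact GLLogic.taut (tautLp_imp_self _)
  | fourf A => exact GLLogic.taut (tautLp_imp_self _)
  | dot2f A => exact GLLogic.taut (tautLp_imp_self _)
  | pf1 A => exact GLLogic.taut (tautLp_imp_self _)
  | pf2 A => exact GLLogic.taut (tautLp_imp_self _)
  | pf3 A => exact GLLogic.taut (tautLp_imp_self _)
  | mp _ _ ih1 ih2 => exact GLLogic.mp ih1 ih2
  | necp _ ih => exact GLLogic.nec ih
  | necf _ ih => exact ih

lemma PFomega_erase {A : Formula} (h : PFomega A) : SLogic (erase A) := by
  induction h with
  | ofPF h => exact SLogic.ofGL (PF_erase h)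
  | reflAx A => exact SLogic.reflAx (erase A)
  | mp _ _ ih1 ih2 => exact SLogic.mp ih1 ih2

lemma GL_lift {A : LpForm} (h : GLLogic A) : PF A.toFormula := by
  induction h with
  | taut h => exact PF.taut (taut_lift h)
  | k A B => exact PF.kp A.toFormula B.toFormula
  | lob A => exact PF.lob A.toFormula
  | mp _ _ ih1 ih2 => exact PF.mp ih1 ih2
  | nec _ ih => exact PF.necp ih

lemma taut_syll (X Y Z : Formula) :
    Taut (.imp (.imp X Y) (.imp (.imp Y Z) (.imp X Z))) := by
  intro f hn ha ho hi
  simp only [hi]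
  cases f X <;> cases f Y <;> cases f Z <;> simp

lemma S_lift {A : LpForm} (h : SLogic A) : PFomega A.toFormula := by
  induction h with
  | ofGL h => exact PFomega.ofPF (GL_lift h)
  | reflAx A =>
      have h1 : PFomega (.imp (.boxp A.toFormula) (.boxf A.toFormula)) :=
        PFomega.reflAx A.toFormula
      have h2 : PFomega (.imp (.boxf A.toFormula) A.toFormula) :=
        PFomega.ofPF (PF.tf A.toFormula)
      have h3 := PFomega.ofPF (PF.taut (taut_syll (.boxp A.toFormula)
        (.boxf A.toFormula) A.toFormula))
      exact PFomega.mp (PFomega.mp h3 h1) h2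
  | mp _ _ ih1 ih2 => exact PFomega.mp ih1 ih2

theorem statement_15 (A : LpForm) :
    PFomega A.toFormula ↔ SLogic A := by
  constructor
  · intro h
    have := PFomega_erase h
    rwa [erase_toFormula] at this
  · exact S_lift

end PFPaper
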